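/- Let n ≥ 2 and let X = μ + R•(A *ᵥ U) be an elliptically distributed random vector with benchmark Y = a ⬝ᵥ X. For every Borel set B₁ ⊆ ℝ such that the event B := {Y ∈ B₁} has P[B] > 0, the vector of conditional covariances of the coordinates of X with Y satisfies Cov_B[X, Y] = Var_B[Y] • β, i.e. Cov_B[X_i, Y] = Var_B[Y]·β_i for every i. -/

import Mathlib

open MeasureTheory ProbabilityTheory Matrix

/-- Expectation of a real random variable under the conditional probability `P[|B]`. -/
noncomputable def condE {Ω : Type*} [MeasurableSpace Ω] (P : Measure Ω) (B : Set Ω)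
    (f : Ω → ℝ) : ℝ :=
  ∫ ω, f ω ∂(P[|B])

/-- Conditional variance on the event `B`. -/
noncomputable def condVar {Ω : Type*} [MeasurableSpace Ω] (P : Measure Ω) (B : Set Ω)
    (f : Ω → ℝ) : ℝ :=
  condE P B fun ω => (f ω - condE P B f) ^ 2

/-- Conditional covariance on the event `B`. -/
noncomputable def condCov {Ω : Type*} [MeasurableSpace Ω] (P : Measure Ω) (B : Set Ω)
    (f g : Ω → ℝ) : ℝ :=
  condE P B fun ω => (f ω - condE P B f) * (g ω - condE P B g)

/-!
Write `Z = R • U`, so that `X = μ + A Z` and `Y = a ⬝ μ + v ⬝ Z` with `v = Aᵀ a`. The reflection `O`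
in the line `ℝ v` is orthogonal, so by independence of `R` and `U` the vector `O Z` has the law of
`Z`. Split `A Z = (v ⬝ Z) β + W` with `W = A (Z - O Z) / 2`: under `Z ↦ O Z` the benchmark `Y` is
invariant while `W` changes sign, hence `E[W h(Y)] = 0` for every measurable `h`, in particular
`E[W; Y ∈ B₁] = E[W Y; Y ∈ B₁] = 0`. Thus `X_i = c_i + β_i Y + W_i` with `W_i` of conditional
mean zero and conditionally uncorrelated with `Y`.
-/

section LineReflection

variable {n : Type*} [Fintype n] [DecidableEq n]

/-- Fixes `v` and negates its orthogonal complement. For `v = 0` the junk value `2 / 0 = 0`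
makes it `-1`, which is still orthogonal. -/
noncomputable def lineReflection (v : n → ℝ) : Matrix n n ℝ :=
  (2 / (v ⬝ᵥ v)) • vecMulVec v v - 1

lemma lineReflection_mulVec (v z : n → ℝ) :
    lineReflection v *ᵥ z = (2 * (v ⬝ᵥ z) / (v ⬝ᵥ v)) • v - z := by
  ext i
  simp only [lineReflection, sub_mulVec, smul_mulVec, vecMulVec_mulVec, one_mulVec,
    Pi.sub_apply, Pi.smul_apply, op_smul_eq_smul, smul_eq_mul]
  ring

lemma dotProduct_lineReflection_mulVec (v z : n → ℝ) :
    v ⬝ᵥ (lineReflection v *ᵥ z) = v ⬝ᵥ z := by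
  rcases eq_or_ne v 0 with rfl | hv
  · simp
  have hs : v ⬝ᵥ v ≠ 0 := by simpa [dotProduct_self_eq_zero] using hv
  rw [lineReflection_mulVec, dotProduct_sub, dotProduct_smul, smul_eq_mul]
  field_simp
  ring

lemma lineReflection_mulVec_lineReflection_mulVec (v z : n → ℝ) :
    lineReflection v *ᵥ (lineReflection v *ᵥ z) = z := by
  rw [lineReflection_mulVec v (lineReflection v *ᵥ z), dotProduct_lineReflection_mulVec,
    lineReflection_mulVec, sub_sub_cancel]

lemma transpose_lineReflection (v : n → ℝ) : (lineReflection v)ᵀ = lineReflection v := by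
  simp [lineReflection, transpose_sub, transpose_smul, transpose_vecMulVec]

lemma lineReflection_mul_transpose (v : n → ℝ) :
    lineReflection v * (lineReflection v)ᵀ = 1 := by
  refine ext_iff_mulVec.2 fun z => ?_
  rw [transpose_lineReflection, ← mulVec_mulVec, lineReflection_mulVec_lineReflection_mulVec,
    one_mulVec]

end LineReflection

section Symmetry

variable {Ω E : Type*} [MeasurableSpace Ω] [MeasurableSpace E] {P : Measure Ω}

lemma integral_comp_eq_zero_of_identDistrib_of_odd {Z : Ω → E} {T : E → E}
    (hZ : IdentDistrib Z (fun ω => T (Z ω)) P P) {g : E → ℝ} (hg : Measurable g)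
    (hodd : ∀ z, g (T z) = -g z) : ∫ ω, g (Z ω) ∂P = 0 := by
  have h := (hZ.comp hg).integral_eq
  simp only [Function.comp_def, hodd, integral_neg] at h
  linarith

lemma setIntegral_preimage_eq_zero_of_identDistrib_of_odd {Z : Ω → E} {T : E → E}
    (hZ : IdentDistrib Z (fun ω => T (Z ω)) P P) {S : Set E} (hS : MeasurableSet S)
    (hTS : ∀ z, T z ∈ S ↔ z ∈ S) {g : E → ℝ} (hg : Measurable g)
    (hodd : ∀ z, g (T z) = -g z) : ∫ ω in Z ⁻¹' S, g (Z ω) ∂P = 0 := by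
  rw [← integral_indicator₀ (hZ.aemeasurable_fst.nullMeasurableSet_preimage hS)]
  refine integral_comp_eq_zero_of_identDistrib_of_odd hZ (hg.indicator hS) fun z => ?_
  by_cases hz : z ∈ S
  · simp [hz, hTS, hodd]
  · simp [hz, hTS]

lemma identDistrib_smul_mulVec {ι : Type*} [Fintype ι] [IsFiniteMeasure P]
    {R : Ω → ℝ} {U : Ω → ι → ℝ} (hR : Measurable R) (hU : Measurable U)
    (hindep : IndepFun R U P) {O : Matrix ι ι ℝ}
    (hO : P.map (fun ω => O *ᵥ U ω) = P.map U) :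
    IdentDistrib (fun ω => R ω • U ω) (fun ω => O *ᵥ (R ω • U ω)) P P := by
  have hOm : Measurable fun u : ι → ℝ => O *ᵥ u :=
    (continuous_const.matrix_mulVec continuous_id).measurable
  have hUO : IdentDistrib U (fun ω => O *ᵥ U ω) P P :=
    ⟨hU.aemeasurable, (hOm.comp hU).aemeasurable, hO.symm⟩
  have hpair := (IdentDistrib.refl hR.aemeasurable).prodMk hUO hindep
    (hindep.comp measurable_id hOm)
  simpa only [Function.comp_def, mulVec_smul] using
    hpair.comp (u := fun p : ℝ × (ι → ℝ) => p.1 • p.2) (by fun_prop)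

end Symmetry

section Moments

variable {Ω : Type*} [MeasurableSpace Ω] {P : Measure Ω} {B : Set Ω}

lemma MeasureTheory.MemLp.cond {f : Ω → ℝ} {p : ENNReal} (hf : MemLp f p P) (hB : P B ≠ 0) :
    MemLp f p P[|B] :=
  (hf.restrict B).smul_measure (ENNReal.inv_ne_top.2 hB)

lemma condCov_eq_covariance (f g : Ω → ℝ) : condCov P B f g = cov[f, g; P[|B]] := rfl

lemma condCov_self (f : Ω → ℝ) : condCov P B f f = condVar P B f := by
  simp only [condCov, _root_.condVar, sq]

lemma memLp_dotProduct {ι : Type*} [Fintype ι] {X : Ω → ι → ℝ} {p : ENNReal} (a : ι → ℝ)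
    (hX : ∀ i, MemLp (fun ω => X ω i) p P) : MemLp (fun ω => a ⬝ᵥ X ω) p P :=
  memLp_finsetSum _ fun i _ => (hX i).const_mul (a i)

variable [IsFiniteMeasure P] {W Y : Ω → ℝ}

lemma condCov_const_add_mul_add_left (hB : P B ≠ 0) (hY : MemLp Y 2 P) (hW : MemLp W 2 P)
    (c b : ℝ) :
    condCov P B (fun ω => c + b * Y ω + W ω) Y = b * condVar P B Y + condCov P B W Y := by
  have := cond_isProbabilityMeasure (μ := P) hB
  have hY' := hY.cond hB
  have hbY : MemLp (fun ω => c + b * Y ω) 2 P[|B] := (memLp_const c).add (hY'.const_mul b)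
  rw [condCov_eq_covariance,
    show (fun ω => c + b * Y ω + W ω) = (fun ω => c + b * Y ω) + W from rfl, covariance_add_left hbY (hW.cond hB) hY',
    covariance_const_add_left ((hY'.const_mul b).integrable one_le_two),
    covariance_const_mul_left, ← condCov_eq_covariance, ← condCov_eq_covariance, condCov_self]

lemma condCov_eq_zero_of_setIntegral_eq_zero (hB : P B ≠ 0) (hW : MemLp W 2 P)
    (hY : MemLp Y 2 P) (hW₀ : ∫ ω in B, W ω ∂P = 0) (hWY₀ : ∫ ω in B, W ω * Y ω ∂P = 0) :
    condCov P B W Y = 0 := by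
  have := cond_isProbabilityMeasure (μ := P) hB
  rw [condCov_eq_covariance, covariance_eq_sub (hW.cond hB) (hY.cond hB)]
  simp only [ProbabilityTheory.cond, integral_smul_measure, Pi.mul_apply, hW₀, hWY₀, smul_zero,
    zero_mul, sub_zero]

end Moments

section BenchmarkResidual

variable {m n : Type*} [Fintype m] [Fintype n] [DecidableEq n] (A : Matrix m n ℝ) (a : m → ℝ)

noncomputable def benchmarkResidual (z : n → ℝ) : m → ℝ :=
  (1 / 2 : ℝ) • (A *ᵥ (z - lineReflection (Aᵀ *ᵥ a) *ᵥ z))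

lemma dotProduct_mulVec_lineReflection_mulVec (z : n → ℝ) :
    a ⬝ᵥ (A *ᵥ (lineReflection (Aᵀ *ᵥ a) *ᵥ z)) = a ⬝ᵥ (A *ᵥ z) := by
  simp only [dotProduct_mulVec a, ← mulVec_transpose, dotProduct_lineReflection_mulVec]

lemma benchmarkResidual_lineReflection_mulVec (z : n → ℝ) :
    benchmarkResidual A a (lineReflection (Aᵀ *ᵥ a) *ᵥ z) = -benchmarkResidual A a z := by
  simp only [benchmarkResidual, lineReflection_mulVec_lineReflection_mulVec, ← smul_neg,
    ← mulVec_neg, neg_sub]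

lemma add_mulVec_apply_eq_affine_add_benchmarkResidual {β : m → ℝ}
    (hβ : β = (1 / (a ⬝ᵥ ((A * Aᵀ) *ᵥ a))) • ((A * Aᵀ) *ᵥ a)) (μ : m → ℝ) (z : n → ℝ) (i : m) :
    (μ + A *ᵥ z) i
      = (μ i - β i * (a ⬝ᵥ μ)) + β i * (a ⬝ᵥ (μ + A *ᵥ z)) + benchmarkResidual A a z i := by
  simp only [hβ, ← mulVec_mulVec, dotProduct_add, dotProduct_mulVec a, ← mulVec_transpose,
    benchmarkResidual, lineReflection_mulVec, mulVec_sub, mulVec_smul, Pi.add_apply,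
    Pi.sub_apply, Pi.smul_apply, smul_eq_mul]
  ring

lemma setIntegral_benchmarkResidual_mul_eq_zero {Ω : Type*} [MeasurableSpace Ω]
    {P : Measure Ω} {Z : Ω → n → ℝ}
    (hZ : IdentDistrib Z (fun ω => lineReflection (Aᵀ *ᵥ a) *ᵥ Z ω) P P) (μ : m → ℝ)
    {B₁ : Set ℝ} (hB₁ : MeasurableSet B₁) {h : ℝ → ℝ} (hh : Measurable h) (i : m) :
    ∫ ω in (fun ω => a ⬝ᵥ (μ + A *ᵥ Z ω)) ⁻¹' B₁,
      benchmarkResidual A a (Z ω) i * h (a ⬝ᵥ (μ + A *ᵥ Z ω)) ∂P = 0 := by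
  have hY : Measurable fun z : n → ℝ => a ⬝ᵥ (μ + A *ᵥ z) := by fun_prop
  have hW : Measurable fun z : n → ℝ => benchmarkResidual A a z i := by
    unfold benchmarkResidual; fun_prop
  have hY_inv (z : n → ℝ) :
      a ⬝ᵥ (μ + A *ᵥ (lineReflection (Aᵀ *ᵥ a) *ᵥ z)) = a ⬝ᵥ (μ + A *ᵥ z) := by
    rw [dotProduct_add, dotProduct_add, dotProduct_mulVec_lineReflection_mulVec]
  exact setIntegral_preimage_eq_zero_of_identDistrib_of_odd hZ (hY hB₁)
    (fun z => by rw [Set.mem_preimage, Set.mem_preimage, hY_inv])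
    (g := fun z => benchmarkResidual A a z i * h (a ⬝ᵥ (μ + A *ᵥ z))) (hW.mul (hh.comp hY))
    (fun z => by rw [hY_inv, benchmarkResidual_lineReflection_mulVec, Pi.neg_apply, neg_mul])

end BenchmarkResidual

theorem conditional_covariance_with_benchmark_general
    {Ω : Type*} [MeasurableSpace Ω] (P : Measure Ω) [IsProbabilityMeasure P]
    (n : ℕ)
    (R : Ω → ℝ) (U : Ω → Fin n → ℝ) (hR : Measurable R) (hU : Measurable U)
    (hUrot : ∀ O : Matrix (Fin n) (Fin n) ℝ, O * Oᵀ = 1 →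
      Measure.map (fun ω => O *ᵥ U ω) P = Measure.map U P)
    (hindep : IndepFun R U P)
    (μv : Fin n → ℝ) (A : Matrix (Fin n) (Fin n) ℝ)
    (a : Fin n → ℝ)
    (X : Ω → Fin n → ℝ) (hX : X = fun ω => μv + R ω • (A *ᵥ U ω))
    (Y : Ω → ℝ) (hY : Y = fun ω => a ⬝ᵥ X ω)
    (hXL2 : ∀ i, MemLp (fun ω => X ω i) 2 P)
    (S : Matrix (Fin n) (Fin n) ℝ) (hS : S = A * Aᵀ)
    (ahat : ℝ) (hahat : ahat = a ⬝ᵥ (S *ᵥ a))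
    (β : Fin n → ℝ) (hβ : β = (1 / ahat) • (S *ᵥ a))
    (B₁ : Set ℝ) (hB₁ : MeasurableSet B₁)
    (B : Set Ω) (hB : B = Y ⁻¹' B₁) (hBpos : 0 < P B) :
    ∀ i, condCov P B (fun ω => X ω i) Y = condVar P B Y * β i := by
  intro i
  set Z : Ω → Fin n → ℝ := fun ω => R ω • U ω
  set W : Ω → ℝ := fun ω => benchmarkResidual A a (Z ω) i
  have hXZ : X = fun ω => μv + A *ᵥ Z ω := by simp only [hX, Z, mulVec_smul]
  have hYZ : Y = fun ω => a ⬝ᵥ (μv + A *ᵥ Z ω) := by rw [hY, hXZ]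
  have hXi : (fun ω => X ω i) = fun ω => (μv i - β i * (a ⬝ᵥ μv)) + β i * Y ω + W ω := by
    rw [hYZ, hXZ]
    exact funext fun ω => add_mulVec_apply_eq_affine_add_benchmarkResidual A a
      (by rw [hβ, hahat, hS]) μv (Z ω) i
  have hZ : IdentDistrib Z (fun ω => lineReflection (Aᵀ *ᵥ a) *ᵥ Z ω) P P :=
    identDistrib_smul_mulVec hR hU hindep (hUrot _ (lineReflection_mul_transpose _))
  have hmoment (h : ℝ → ℝ) (hh : Measurable h) : ∫ ω in B, W ω * h (Y ω) ∂P = 0 := by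
    rw [hB, hYZ]
    exact setIntegral_benchmarkResidual_mul_eq_zero A a hZ μv hB₁ hh i
  have hYL2 : MemLp Y 2 P := hY ▸ memLp_dotProduct a hXL2
  have hWL2 : MemLp W 2 P := by
    have hWX : W = fun ω => X ω i - ((μv i - β i * (a ⬝ᵥ μv)) + β i * Y ω) :=
      funext fun ω => eq_sub_of_add_eq' (congrFun hXi ω).symm
    rw [hWX]
    exact (hXL2 i).sub ((memLp_const (μv i - β i * (a ⬝ᵥ μv))).add (hYL2.const_mul (β i)))
  rw [hXi, condCov_const_add_mul_add_left hBpos.ne' hYL2 hWL2,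
    condCov_eq_zero_of_setIntegral_eq_zero hBpos.ne' hWL2 hYL2
      (by simpa using hmoment 1 measurable_const) (hmoment id measurable_id), add_zero, mul_comm]

theorem conditional_covariance_with_benchmark
    {Ω : Type*} [MeasurableSpace Ω] (P : Measure Ω) [IsProbabilityMeasure P]
    (n : ℕ) (hn : 2 ≤ n)
    (R : Ω → ℝ) (U : Ω → Fin n → ℝ) (hR : Measurable R) (hU : Measurable U)
    (hRpos : ∀ᵐ ω ∂P, 0 < R ω)
    (hR2 : ∫ ω, R ω ^ 2 ∂P = (n : ℝ))
    (hRL2 : MemLp R 2 P)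
    (hUsphere : ∀ᵐ ω ∂P, ∑ i, U ω i ^ 2 = 1)
    (hUrot : ∀ O : Matrix (Fin n) (Fin n) ℝ, O * Oᵀ = 1 →
      Measure.map (fun ω => O *ᵥ U ω) P = Measure.map U P)
    (hindep : IndepFun R U P)
    (μv : Fin n → ℝ) (A : Matrix (Fin n) (Fin n) ℝ) (hA : IsUnit A.det)
    (a : Fin n → ℝ) (ha : a ≠ 0)
    (X : Ω → Fin n → ℝ) (hX : X = fun ω => μv + R ω • (A *ᵥ U ω))
    (Y : Ω → ℝ) (hY : Y = fun ω => a ⬝ᵥ X ω)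
    (hXL2 : ∀ i, MemLp (fun ω => X ω i) 2 P)
    (S : Matrix (Fin n) (Fin n) ℝ) (hS : S = A * Aᵀ)
    (ahat : ℝ) (hahat : ahat = a ⬝ᵥ (S *ᵥ a))
    (β : Fin n → ℝ) (hβ : β = (1 / ahat) • (S *ᵥ a))
    (B₁ : Set ℝ) (hB₁ : MeasurableSet B₁)
    (B : Set Ω) (hB : B = Y ⁻¹' B₁) (hBpos : 0 < P B) :
    ∀ i, condCov P B (fun ω => X ω i) Y = condVar P B Y * β i :=
  conditional_covariance_with_benchmark_general P n R U hR hU hUrot hindep μv A a X hX Y hY hXL2 S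
    hS ahat hahat β hβ B₁ hB₁ B hB hBpos
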